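/- Dual-number-valued characters are tangent vectors: let M be a smooth manifold without boundary modeled on ℝ^n (finite-dimensional), Hausdorff and second countable, and let ℝ[ε] denote the algebra of dual numbers over ℝ (ε² = 0). For every unital ℝ-algebra homomorphism φ : C^∞(M) → ℝ[ε] there exist a unique point x ∈ M and a unique ℝ-linear map D : C^∞(M) → ℝ satisfying the Leibniz rule D(fg) = f(x)·D(g) + D(f)·g(x) for all f, g ∈ C^∞(M), such that φ(f) = f(x) + D(f)·ε for every f ∈ C^∞(M). -/

import Mathlib

/-!
Composing `φ` with the first projection gives a real character `ψ` of `C^∞(M)`, and every such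
character is evaluation at a point. Indeed, for finitely many `fᵢ` the function `∑ (fᵢ - ψ fᵢ)²`
lies in the kernel of `ψ`, so it is not a unit and vanishes somewhere: the closed sets
`{f = ψ f}` have the finite intersection property. For a proper smooth function `h` the set
`{h = ψ h}` is compact, so all of them meet. The second component of `φ` is then a derivation at
that point because `(a + b ε)(c + d ε) = ac + (ad + bc) ε`, and the point is unique because smooth
functions separate points.
-/

open scoped Manifold ContDiff
open Set

namespace ContMDiffMap

variable {E : Type*} [NormedAddCommGroup E] [NormedSpace ℝ E]
  {H : Type*} [TopologicalSpace H] {I : ModelWithCorners ℝ E H}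
  {M : Type*} [TopologicalSpace M] [ChartedSpace H M] {k : ℕ∞}

variable (I k) in
noncomputable def evalAlgHom (x : M) : C^k⟮I, M; ℝ⟯ →ₐ[ℝ] ℝ :=
  (Pi.evalAlgHom ℝ (fun _ ↦ ℝ) x).comp coeFnAlgHom

@[simp]
theorem evalAlgHom_apply (x : M) (f : C^k⟮I, M; ℝ⟯) : evalAlgHom I k x f = f x := rfl

theorem isUnit_of_forall_ne_zero {f : C^k⟮I, M; ℝ⟯} (hf : ∀ x, f x ≠ 0) : IsUnit f :=
  isUnit_iff_exists_inv.2
    ⟨⟨fun x ↦ (f x)⁻¹, f.contMDiff.inv₀ hf⟩, ext fun x ↦ mul_inv_cancel₀ (hf x)⟩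

theorem exists_forall_mem_apply_eq_of_algHom (ψ : C^k⟮I, M; ℝ⟯ →ₐ[ℝ] ℝ)
    (s : Finset C^k⟮I, M; ℝ⟯) : ∃ x, ∀ f ∈ s, f x = ψ f := by
  set G : C^k⟮I, M; ℝ⟯ := ∑ f ∈ s, (f - algebraMap ℝ _ (ψ f)) ^ 2
  have hψG : ψ G = 0 := by simp [G]
  have hG : ∀ x, G x = ∑ f ∈ s, (f x - ψ f) ^ 2 := fun x ↦ by
    rw [← evalAlgHom_apply (I := I) (k := k)]
    simp only [G, map_sum, map_pow, map_sub, AlgHom.commutes, evalAlgHom_apply,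
      Algebra.algebraMap_self, RingHom.id_apply]
  obtain ⟨x, hx⟩ : ∃ x, G x = 0 := by
    by_contra! hG0
    simpa [hψG] using (isUnit_of_forall_ne_zero hG0).map ψ
  refine ⟨x, fun f hf ↦ sub_eq_zero.1 (pow_eq_zero_iff two_ne_zero |>.1 ?_)⟩
  rw [hG, Finset.sum_eq_zero_iff_of_nonneg fun _ _ ↦ sq_nonneg _] at hx
  exact hx f hf

section SigmaCompact

variable [FiniteDimensional ℝ E] [IsManifold I ∞ M] [T2Space M] [SigmaCompactSpace M]

variable (I M) in
theorem exists_isCompact_preimage_Iic : ∃ h : C^k⟮I, M; ℝ⟯, ∀ c, IsCompact (h ⁻¹' Iic c) := by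
  have : LocallyCompactSpace H := I.locallyCompactSpace
  have : LocallyCompactSpace M := ChartedSpace.locallyCompactSpace H M
  set K := CompactExhaustion.choice M
  obtain ⟨h, hh⟩ : ∃ h : C^k⟮I, M; ℝ⟯, ∀ x, h x ∈ Ici (K.find x : ℝ) := by
    refine exists_contMDiffMap_forall_mem_convex_of_local_const I (fun _ ↦ convex_Ici _)
      fun x ↦ ⟨K.find x + 1, ?_⟩
    filter_upwards [mem_interior_iff_mem_nhds.1 (K.subset_interior_succ _ (K.mem_find x))]
      with y hy
    exact mem_Ici.2 (mod_cast K.mem_iff_find_le.1 hy)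
  refine ⟨h, fun c ↦ (K.isCompact ⌈c⌉₊).of_isClosed_subset
    (isClosed_Iic.preimage h.contMDiff.continuous) fun x hx ↦ K.mem_iff_find_le.2 ?_⟩
  exact_mod_cast (hh x).trans (hx.trans (Nat.le_ceil c))

theorem exists_eq_evalAlgHom (ψ : C^k⟮I, M; ℝ⟯ →ₐ[ℝ] ℝ) : ∃ x, ψ = evalAlgHom I k x := by
  classical
  obtain ⟨h, hh⟩ := exists_isCompact_preimage_Iic I M (k := k)
  have hS : IsCompact {x | h x = ψ h} :=
    (hh (ψ h)).of_isClosed_subset (isClosed_eq h.contMDiff.continuous continuous_const)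
      fun x hx ↦ hx.le
  obtain ⟨x, -, hx⟩ := hS.inter_iInter_nonempty (fun f ↦ {x | f x = ψ f})
    (fun f ↦ isClosed_eq f.contMDiff.continuous continuous_const) fun s ↦ by
      obtain ⟨x, hx⟩ := exists_forall_mem_apply_eq_of_algHom ψ (insert h s)
      exact ⟨x, hx h (Finset.mem_insert_self h s), mem_iInter₂.2 fun f hf ↦
        hx f (Finset.mem_insert_of_mem hf)⟩
  exact ⟨x, AlgHom.ext fun f ↦ (mem_iInter.1 hx f).symm⟩

theorem exists_apply_ne_of_ne {x y : M} (hxy : x ≠ y) : ∃ f : C^k⟮I, M; ℝ⟯, f x ≠ f y := by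
  obtain ⟨f, hfy, hfx, -⟩ := exists_contMDiffMap_zero_one_of_isClosed I (n := k)
    isClosed_singleton isClosed_singleton (disjoint_singleton.2 hxy.symm)
  exact ⟨f, by simp [hfy rfl, hfx rfl]⟩

end SigmaCompact

end ContMDiffMap

/-- **Dual-number-valued characters are tangent vectors**: every unital `ℝ`-algebra
homomorphism `φ : C^∞(M) → ℝ[ε]` into the dual numbers is of the form
`φ f = f x + D f · ε` for a unique point `x ∈ M` and a unique point derivation `D`
at `x`. -/
theorem dualNumber_characters_are_tangent_vectors {n : ℕ} {M : Type*} [TopologicalSpace M]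
    [ChartedSpace (EuclideanSpace ℝ (Fin n)) M]
    [IsManifold (𝓡 n) (⊤ : ℕ∞) M] [T2Space M] [SecondCountableTopology M]
    (φ : C^(⊤ : ℕ∞)⟮𝓡 n, M; ℝ⟯ →ₐ[ℝ] DualNumber ℝ) :
    ∃! xD : M × (C^(⊤ : ℕ∞)⟮𝓡 n, M; ℝ⟯ →ₗ[ℝ] ℝ),
      (∀ f g : C^(⊤ : ℕ∞)⟮𝓡 n, M; ℝ⟯,
        xD.2 (f * g) = f xD.1 * xD.2 g + xD.2 f * g xD.1) ∧
      ∀ f : C^(⊤ : ℕ∞)⟮𝓡 n, M; ℝ⟯,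
        φ f = TrivSqZeroExt.inl (f xD.1) + TrivSqZeroExt.inr (xD.2 f) := by
  have : LocallyCompactSpace M := Manifold.locallyCompact_of_finiteDimensional (𝓡 n)
  obtain ⟨x, hx⟩ := ContMDiffMap.exists_eq_evalAlgHom ((TrivSqZeroExt.fstHom ℝ ℝ ℝ).comp φ)
  have hfst (f : C^(⊤ : ℕ∞)⟮𝓡 n, M; ℝ⟯) : (φ f).fst = f x := AlgHom.congr_fun hx f
  refine ⟨(x, (TrivSqZeroExt.sndHom ℝ ℝ).comp φ.toLinearMap), ⟨fun f g ↦ ?_, fun f ↦ ?_⟩, ?_⟩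
  · simp [map_mul, hfst]
  · rw [← hfst]
    exact (TrivSqZeroExt.inl_fst_add_inr_snd_eq _).symm
  · rintro ⟨y, D⟩ ⟨-, hy⟩
    have hφ (f : C^(⊤ : ℕ∞)⟮𝓡 n, M; ℝ⟯) : (φ f).fst = f y ∧ (φ f).snd = D f := by simp [hy f]
    obtain rfl : y = x := by
      by_contra hne
      obtain ⟨f, hf⟩ := ContMDiffMap.exists_apply_ne_of_ne (I := 𝓡 n) (k := ⊤) hne
      exact hf ((hφ f).1.symm.trans (hfst f))
    exact Prod.ext rfl (LinearMap.ext fun f ↦ (hφ f).2.symm)
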